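/- Let u_0, u_1, u_2, u_3 be points in a tree with u_1 ≠ u_2, such that [u_0,u_1] ∩ [u_1,u_2] is strictly contained in both arcs, [u_1,u_2] ∩ [u_2,u_3] is strictly contained in both arcs, and [u_0,u_1] ∩ [u_1,u_2] ∩ [u_2,u_3] = ∅. Then [u_0,u_1] ∩ [u_2,u_3] = ∅. -/
import Mathlib


open SimpleGraph

/-- The set of vertices on the unique path between two vertices of a tree
(the geodesic arc `[x,y]`). -/
noncomputable def seg {V : Type*} {T : SimpleGraph V} (hT : T.IsTree) (x y : V) : Set V :=
  {z | z ∈ ((hT.existsUnique_path x y).exists.choose).support}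

/-- A set of vertices is convex (a subtree) if it contains the arc between
any two of its points. -/
def IsSubtree {V : Type*} {T : SimpleGraph V} (hT : T.IsTree) (S : Set V) : Prop :=
  ∀ x ∈ S, ∀ y ∈ S, seg hT x y ⊆ S

section aux

variable {V : Type*} {T : SimpleGraph V} (hT : T.IsTree)

lemma seg_eq_support {x y : V} (p : T.Walk x y) (hp : p.IsPath) :
    seg hT x y = {z | z ∈ p.support} := by
  have h1 : ((hT.existsUnique_path x y).exists.choose).IsPath :=
    (hT.existsUnique_path x y).exists.choose_spec
  have h2 := ((hT.existsUnique_path x y).unique hp h1)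
  simp only [seg, h2]

lemma mem_seg_left (x y : V) : x ∈ seg hT x y :=
  SimpleGraph.Walk.start_mem_support _

lemma mem_seg_right (x y : V) : y ∈ seg hT x y :=
  SimpleGraph.Walk.end_mem_support _

lemma seg_symm (x y : V) : seg hT x y = seg hT y x := by
  have h1 : ((hT.existsUnique_path x y).exists.choose).IsPath :=
    (hT.existsUnique_path x y).exists.choose_spec
  rw [seg_eq_support hT _ h1.reverse]
  ext z
  simp [seg, SimpleGraph.Walk.support_reverse]

/-- If `z` lies on `[x,y]`, then `[z,y] ⊆ [x,y]`. -/
lemma seg_subset_of_mem {x y z : V} (hz : z ∈ seg hT x y) :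
    seg hT z y ⊆ seg hT x y := by
  classical
  have h1 : ((hT.existsUnique_path x y).exists.choose).IsPath :=
    (hT.existsUnique_path x y).exists.choose_spec
  have hz' : z ∈ ((hT.existsUnique_path x y).exists.choose).support := hz
  rw [seg_eq_support hT _ (h1.dropUntil hz')]
  intro w hw
  exact SimpleGraph.Walk.support_dropUntil_subset _ hz' hw

/-- If `z` lies on `[x,y]`, then `[x,y] ⊆ [x,z] ∪ [z,y]`. -/
lemma seg_subset_union_of_mem {x y z : V} (hz : z ∈ seg hT x y) :
    seg hT x y ⊆ seg hT x z ∪ seg hT z y := by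
  classical
  have h1 : ((hT.existsUnique_path x y).exists.choose).IsPath :=
    (hT.existsUnique_path x y).exists.choose_spec
  have hz' : z ∈ ((hT.existsUnique_path x y).exists.choose).support := hz
  intro w hw
  have hw' : w ∈ ((hT.existsUnique_path x y).exists.choose).support := hw
  rw [← SimpleGraph.Walk.take_spec _ hz', SimpleGraph.Walk.mem_support_append_iff] at hw'
  rcases hw' with hw' | hw'
  · left
    rw [seg_eq_support hT _ (h1.takeUntil hz')]
    exact hw'
  · right
    rw [seg_eq_support hT _ (h1.dropUntil hz')]
    exact hw'

lemma seg_of_adj {x y : V} (h : T.Adj x y) :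
    seg hT x y = {x, y} := by
  have hp : (SimpleGraph.Walk.cons h SimpleGraph.Walk.nil).IsPath := by
    simp [SimpleGraph.Walk.isPath_iff_eq_nil, h.ne]
  rw [seg_eq_support hT _ hp]
  ext z
  simp [SimpleGraph.Walk.support_cons]

/-- Median lemma: for a path `P` from `w` to `u₁` and any vertex `u₂`, there is a
point `m` on `P` lying on both `[u₁,u₂]` and `[w,u₂]`. -/
lemma median (u₂ : V) : ∀ {w u₁ : V} (P : T.Walk w u₁), P.IsPath →
    ∃ m, m ∈ P.support ∧ m ∈ seg hT u₁ u₂ ∧ m ∈ seg hT w u₂ := by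
  intro w u₁ P
  induction P with
  | nil =>
    intro _
    exact ⟨_, by simp, mem_seg_left hT _ _, mem_seg_left hT _ _⟩
  | @cons w w' u₁ h p ih =>
    intro hp
    obtain ⟨m, hmP, hm1, hm2⟩ := ih hp.of_cons
    by_cases hww' : w ∈ seg hT w' u₂
    · -- w lies on [w', u₂]
      by_cases hmw' : m = w'
      · -- then w' ∈ [u₁,u₂], and [w',u₂] ⊆ [u₁,u₂], so w works
        have hsub : seg hT w' u₂ ⊆ seg hT u₁ u₂ := seg_subset_of_mem hT (hmw' ▸ hm1)
        exact ⟨w, by simp [SimpleGraph.Walk.support_cons], hsub hww',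
          mem_seg_left hT _ _⟩
      · -- m ≠ w' : then m ∈ [w,u₂]
        by_cases hmw : m = w
        · exact ⟨w, by simp [SimpleGraph.Walk.support_cons], hmw ▸ hm1,
            mem_seg_left hT _ _⟩
        · have hsplit := seg_subset_union_of_mem hT hww' hm2
          have hadj : seg hT w' w = {w', w} := seg_of_adj hT h.symm
          rcases hsplit with hA | hB
          · rw [hadj] at hA
            rcases hA with hA | hA
            · exact absurd hA hmw'
            · exact absurd hA hmw
          · exact ⟨m, by simp [SimpleGraph.Walk.support_cons, hmP], hm1, hB⟩
    · -- w does not lie on [w', u₂] : then [w,u₂] = {w} ∪ [w',u₂]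
      have h1 : ((hT.existsUnique_path w' u₂).exists.choose).IsPath :=
        (hT.existsUnique_path w' u₂).exists.choose_spec
      have hw_not : w ∉ ((hT.existsUnique_path w' u₂).exists.choose).support := hww'
      have hp' : (SimpleGraph.Walk.cons h ((hT.existsUnique_path w' u₂).exists.choose)).IsPath :=
        h1.cons hw_not
      have hseg : seg hT w u₂ = {z | z ∈ (SimpleGraph.Walk.cons h
          ((hT.existsUnique_path w' u₂).exists.choose)).support} :=
        seg_eq_support hT _ hp'
      have hm2' : m ∈ seg hT w u₂ := by
        rw [hseg]
        simp only [Set.mem_setOf_eq, SimpleGraph.Walk.support_cons, List.mem_cons]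
        exact Or.inr hm2
      exact ⟨m, by simp [SimpleGraph.Walk.support_cons, hmP], hm1, hm2'⟩

end aux

/-- Base case of the backtracking lemma: for four points with the
no-deep-backtracking conditions, the first and last arcs are disjoint. -/
theorem backtracking_base {V : Type*} {T : SimpleGraph V} (hT : T.IsTree)
    (u₀ u₁ u₂ u₃ : V) (h12 : u₁ ≠ u₂)
    (h2a : seg hT u₀ u₁ ∩ seg hT u₁ u₂ ⊂ seg hT u₀ u₁)
    (h2b : seg hT u₀ u₁ ∩ seg hT u₁ u₂ ⊂ seg hT u₁ u₂)
    (h2c : seg hT u₁ u₂ ∩ seg hT u₂ u₃ ⊂ seg hT u₁ u₂)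
    (h2d : seg hT u₁ u₂ ∩ seg hT u₂ u₃ ⊂ seg hT u₂ u₃)
    (h3 : seg hT u₀ u₁ ∩ seg hT u₁ u₂ ∩ seg hT u₂ u₃ = ∅) :
    seg hT u₀ u₁ ∩ seg hT u₂ u₃ = ∅ := by
  by_contra hne
  obtain ⟨w, hw0, hw3⟩ := Set.nonempty_iff_ne_empty.2 hne
  -- the path from w to u₁
  set P := (hT.existsUnique_path w u₁).exists.choose with hP
  have hPpath : P.IsPath := (hT.existsUnique_path w u₁).exists.choose_spec
  obtain ⟨m, hmP, hm1, hm2⟩ := median hT u₂ P hPpath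
  have hmw1 : m ∈ seg hT w u₁ := by
    rw [seg_eq_support hT P hPpath]; exact hmP
  -- m ∈ [u₀,u₁]
  have hm01 : m ∈ seg hT u₀ u₁ := seg_subset_of_mem hT hw0 hmw1
  -- m ∈ [u₂,u₃]
  have hm23 : m ∈ seg hT u₂ u₃ := by
    have hw32 : w ∈ seg hT u₃ u₂ := (seg_symm hT u₂ u₃) ▸ hw3
    have : seg hT w u₂ ⊆ seg hT u₃ u₂ := seg_subset_of_mem hT hw32
    exact (seg_symm hT u₂ u₃) ▸ this hm2
  have : m ∈ seg hT u₀ u₁ ∩ seg hT u₁ u₂ ∩ seg hT u₂ u₃ := ⟨⟨hm01, hm1⟩, hm23⟩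
  rw [h3] at this
  exact this
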